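/- Let Ω ⊆ ℝ be an infinite compact set with λ(Ω) = 0 (i.e., Ω is an interval [a,b] with a < b) and n ≥ 3. Then d_n(Ω) = 2n - 3: the minimal possible maximal degree of an n-element positive basis of an n-dimensional subspace of polynomial functions on [a,b] equals 2n-3. -/

import Mathlib

/-- `PosBasisWithDeg Ω n d` : there is an `n`-dimensional subspace of `C(Ω)` consisting
of (restrictions of) polynomial functions with an `n`-element positive basis all of whose
elements are polynomials of degree at most `d`. -/
def PosBasisWithDeg (Ω : Set ℝ) (n d : ℕ) : Prop :=
  ∃ bb : Fin n → (Ω → ℝ),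
    (∀ i, ∃ p : Polynomial ℝ, p.natDegree ≤ d ∧ ∀ x : Ω, bb i x = p.eval (x : ℝ)) ∧
    LinearIndependent ℝ bb ∧
    ∀ f ∈ Submodule.span ℝ (Set.range bb),
      ((∀ x : Ω, 0 ≤ f x) ↔ ∃ c : Fin n → ℝ, (∀ i, 0 ≤ c i) ∧ f = ∑ i, c i • bb i)

/-!
Upper bound: take nodes `a = t₀ < t₁ < ⋯ < tₙ₋₁ = b` and let `bⱼ` be the product over `i ≠ j` of
`X - a`, `b - X` or `(X - tᵢ)²` according as `tᵢ` is `a`, `b` or interior. These are nonnegative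
on `[a, b]` and `bⱼ` vanishes exactly at the nodes other than `tⱼ`, so evaluation at the nodes
reads off coefficients and the `bⱼ` form a positive basis; `deg bⱼ` is `2n - 2` minus the degree of
the omitted factor.

Lower bound: in a positive basis no `bⱼ` is dominated by a multiple of `q = ∑_{i ≠ j} bᵢ`, so by
compactness there is a point `tⱼ` approached along which `q = o(bⱼ)`; hence `bⱼ` vanishes at `tⱼ`
to strictly lower order than every other `bᵢ`. These nodes are distinct, and a nonnegative `bᵢ`
vanishes to even, hence at least second, order at every interior node `tⱼ`, `j ≠ i`. Taking `i`
with `tᵢ` an endpoint if some node is one, the other `n - 1` nodes account for at least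
`2(n - 1) - 1` roots of `bᵢ`.
-/

open Polynomial Finset Function Set Filter Topology Asymptotics

namespace Polynomial

theorem sum_rootMultiplicity_le_natDegree {R : Type*} [CommRing R] [IsDomain R] [DecidableEq R]
    (p : R[X]) (s : Finset R) : ∑ x ∈ s, p.rootMultiplicity x ≤ p.natDegree :=
  calc ∑ x ∈ s, p.rootMultiplicity x = ∑ x ∈ s, p.roots.count x := by simp only [count_roots]
    _ ≤ ∑ x ∈ s ∪ p.roots.toFinset, p.roots.count x := sum_le_sum_of_subset subset_union_left
    _ = Multiset.card p.roots :=
      Multiset.sum_count_eq_card fun _ hx => mem_union_right _ (Multiset.mem_toFinset.2 hx)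
    _ ≤ p.natDegree := card_roots' p

theorem eval_eq_pow_mul_eval_divByMonic {R : Type*} [CommRing R] (p : R[X]) (t x : R) :
    p.eval x = (x - t) ^ p.rootMultiplicity t * (p /ₘ (X - C t) ^ p.rootMultiplicity t).eval x := by
  conv_lhs => rw [← pow_mul_divByMonic_rootMultiplicity_eq p t]
  simp only [eval_mul, eval_pow, eval_sub, eval_X, eval_C]

variable {p q : ℝ[X]} {t : ℝ} {m : ℕ}

theorem isBigO_pow_sub_of_dvd (h : (X - C t) ^ m ∣ p) :
    (fun x => p.eval x) =O[𝓝 t] fun x => (x - t) ^ m := by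
  obtain ⟨r, rfl⟩ := h
  simpa only [eval_mul, eval_pow, eval_sub, eval_X, eval_C, mul_one] using
    (isBigO_refl (fun x => (x - t) ^ m) _).mul
      (isBigO_const_of_tendsto (r.continuous.tendsto t) one_ne_zero)

theorem isBigO_pow_rootMultiplicity (hp : p ≠ 0) :
    (fun x => (x - t) ^ p.rootMultiplicity t) =O[𝓝 t] fun x => p.eval x := by
  set u := p /ₘ (X - C t) ^ p.rootMultiplicity t
  have hu : 0 < ‖u.eval t‖ := norm_pos_iff.2 (eval_divByMonic_pow_rootMultiplicity_ne_zero t hp)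
  have hbdd : (fun _ => (1 : ℝ)) =O[𝓝 t] fun x => u.eval x :=
    (isBigO_const_left_iff_pos_le_norm one_ne_zero).2 ⟨_, half_pos hu,
      (u.continuous.tendsto t).norm.eventually (eventually_ge_nhds (half_lt_self hu))⟩
  exact ((isBigO_refl _ _).mul hbdd).congr (fun _ => mul_one _)
    fun x => (eval_eq_pow_mul_eval_divByMonic p t x).symm

theorem rootMultiplicity_lt_of_isLittleO {α : Type*} {l : Filter α} [l.NeBot] {y : α → ℝ}
    (hy : Tendsto y l (𝓝 t)) (hq : q ≠ 0) (hp : ∀ᶠ k in l, p.eval (y k) ≠ 0)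
    (h : (fun k => q.eval (y k)) =o[l] fun k => p.eval (y k)) :
    p.rootMultiplicity t < q.rootMultiplicity t := by
  by_contra! hle
  have hdvd : (X - C t) ^ q.rootMultiplicity t ∣ p :=
    (pow_dvd_pow _ hle).trans (pow_rootMultiplicity_dvd p t)
  refine isLittleO_irrefl (hp.frequently.mono fun k hk hzero => hk ?_)
    ((((isBigO_pow_rootMultiplicity hq).comp_tendsto hy).trans_isLittleO h).trans_isBigO
      ((isBigO_pow_sub_of_dvd hdvd).comp_tendsto hy))
  exact eval_eq_zero_of_dvd_of_eval_eq_zero hdvd (by simpa using hzero)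

theorem exists_forall_rootMultiplicity_lt {K : Set ℝ} (hK : IsCompact K)
    (h : ∀ k : ℕ, ∃ x ∈ K, (k + 1) * q.eval x < p.eval x) :
    ∃ t ∈ K, ∀ r : ℝ[X], r ≠ 0 → (∀ x ∈ K, |r.eval x| ≤ q.eval x) →
      p.rootMultiplicity t < r.rootMultiplicity t := by
  choose x hxK hx using h
  obtain ⟨t, htK, φ, hφ, hlim⟩ := hK.tendsto_subseq hxK
  refine ⟨t, htK, fun r hr hrq => ?_⟩
  have hrx : ∀ k, |r.eval (x k)| < p.eval (x k) * (1 / ((k : ℝ) + 1)) := fun k => by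
    rw [mul_one_div, lt_div_iff₀ (by positivity), mul_comm]
    exact (mul_le_mul_of_nonneg_left (hrq _ (hxK k)) (by positivity)).trans_lt (hx k)
  have hpos : ∀ k, 0 < p.eval (x k) := fun k =>
    (mul_nonneg (by positivity) ((abs_nonneg _).trans (hrq _ (hxK k)))).trans_lt (hx k)
  have hdecay : (fun k => p.eval (x k) * (1 / ((k : ℝ) + 1))) =o[atTop] fun k => p.eval (x k) :=
    ((isBigO_refl _ _).mul_isLittleO
      ((isLittleO_one_iff ℝ).2 tendsto_one_div_add_atTop_nhds_zero_nat)).congr_right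
      fun k => mul_one _
  have hsmall : (fun k => r.eval (x k)) =o[atTop] fun k => p.eval (x k) := by
    refine (IsBigO.of_bound 1 (Eventually.of_forall fun k => ?_)).trans_isLittleO hdecay
    rw [one_mul, Real.norm_eq_abs, Real.norm_eq_abs]
    exact (hrx k).le.trans (le_abs_self _)
  exact rootMultiplicity_lt_of_isLittleO hlim hr (Eventually.of_forall fun k => (hpos _).ne')
    (hsmall.comp_tendsto hφ.tendsto_atTop)

theorem even_rootMultiplicity_of_nonneg {s : Set ℝ} (hp : p ≠ 0) (hs : s ∈ 𝓝 t)
    (hnn : ∀ x ∈ s, 0 ≤ p.eval x) : Even (p.rootMultiplicity t) := by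
  set u := p /ₘ (X - C t) ^ p.rootMultiplicity t
  have hu : u.eval t ≠ 0 := eval_divByMonic_pow_rootMultiplicity_ne_zero t hp
  by_contra hodd
  rw [Nat.not_even_iff_odd] at hodd
  have hreflect : Tendsto (fun x => 2 * t - x) (𝓝 t) (𝓝 t) := by
    simpa [two_mul] using
      (continuous_const.sub continuous_id).tendsto (f := fun x : ℝ => 2 * t - x) t
  have hg : Tendsto (fun x => u.eval x * u.eval (2 * t - x)) (𝓝 t) (𝓝 (u.eval t * u.eval t)) :=
    (u.continuous.tendsto t).mul ((u.continuous.tendsto t).comp hreflect)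
  have hev : ∀ᶠ x in 𝓝[≠] t, ((x ∈ s ∧ 2 * t - x ∈ s) ∧
      0 < u.eval x * u.eval (2 * t - x)) ∧ x ≠ t :=
    (eventually_nhdsWithin_of_eventually_nhds
      (((show ∀ᶠ x in 𝓝 t, x ∈ s from hs).and (hreflect.eventually hs)).and
        (hg.eventually (lt_mem_nhds (mul_self_pos.2 hu))))).and self_mem_nhdsWithin
  obtain ⟨x, ⟨⟨hxs, hxs'⟩, hgx⟩, hxt⟩ := hev.exists
  have hprod := mul_nonneg (hnn x hxs) (hnn _ hxs')
  rw [eval_eq_pow_mul_eval_divByMonic p t x, eval_eq_pow_mul_eval_divByMonic p t (2 * t - x),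
    show 2 * t - x - t = -(x - t) by ring, hodd.neg_pow] at hprod
  have hx0 : 0 < ((x - t) ^ p.rootMultiplicity t) ^ 2 :=
    pow_two_pos_of_ne_zero (pow_ne_zero _ (sub_ne_zero.2 hxt))
  nlinarith [mul_pos hx0 hgx]

end Polynomial

def IsPosBasis {ι Ω : Type*} [Fintype ι] (bb : ι → Ω → ℝ) : Prop :=
  LinearIndependent ℝ bb ∧
    ∀ f ∈ Submodule.span ℝ (Set.range bb),
      ((∀ x, 0 ≤ f x) ↔ ∃ c : ι → ℝ, (∀ i, 0 ≤ c i) ∧ f = ∑ i, c i • bb i)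

namespace IsPosBasis

variable {ι Ω : Type*} [Fintype ι] {bb : ι → Ω → ℝ}

theorem nonneg (h : IsPosBasis bb) (i : ι) (x : Ω) : 0 ≤ bb i x := by
  classical
  refine (h.2 _ (Submodule.subset_span ⟨i, rfl⟩)).2 ⟨Pi.single i 1, fun j => ?_, ?_⟩ x
  · by_cases hj : j = i <;> simp [hj]
  · simp [Pi.single_apply, ite_smul]

theorem exists_mul_sum_erase_lt [DecidableEq ι] (h : IsPosBasis bb) (j : ι) (c : ℝ) :
    ∃ x, c * ∑ i ∈ univ.erase j, bb i x < bb j x := by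
  by_contra! hle
  set e : ι → ℝ := fun i => if i = j then -1 else c
  have hf : ∀ x, (∑ i, e i • bb i) x = c * ∑ i ∈ univ.erase j, bb i x - bb j x := by
    intro x
    rw [Finset.sum_apply, ← Finset.add_sum_erase _ _ (Finset.mem_univ j), mul_sum]
    simp [e, sub_eq_neg_add, Finset.sum_congr rfl fun i hi => if_neg (ne_of_mem_erase hi)]
  obtain ⟨d, hd, hde⟩ := (h.2 _ (Submodule.sum_mem _ fun i _ =>
    Submodule.smul_mem _ _ (Submodule.subset_span ⟨i, rfl⟩))).1
    fun x => by rw [hf]; linarith [hle x]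
  have := Fintype.linearIndependent_iffₛ.1 h.1 e d hde j
  simp only [e, if_pos rfl] at this
  linarith [hd j]

theorem of_nodes [DecidableEq ι] (x : ι → Ω) (hnn : ∀ i y, 0 ≤ bb i y)
    (hpos : ∀ i, 0 < bb i (x i)) (hzero : ∀ i j, i ≠ j → bb i (x j) = 0) : IsPosBasis bb := by
  have heval : ∀ (c : ι → ℝ) j, (∑ i, c i • bb i) (x j) = c j * bb j (x j) := fun c j => by
    rw [Finset.sum_apply, Finset.sum_eq_single j (fun i _ hij => by simp [hzero i j hij])
      (fun h => absurd (Finset.mem_univ j) h)]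
    rfl
  refine ⟨Fintype.linearIndependent_iff.2 fun c hc j => ?_, fun f hf => ⟨fun hfnn => ?_, ?_⟩⟩
  · have := heval c j
    rw [hc] at this
    exact (mul_eq_zero.1 this.symm).resolve_right (hpos j).ne'
  · obtain ⟨c, rfl⟩ := (Submodule.mem_span_range_iff_exists_fun ℝ).1 hf
    refine ⟨c, fun j => ?_, rfl⟩
    have := hfnn (x j)
    rw [heval] at this
    exact nonneg_of_mul_nonneg_left this (hpos j)
  · rintro ⟨c, hc, rfl⟩ y
    rw [Finset.sum_apply]
    exact sum_nonneg fun i _ => mul_nonneg (hc i) (hnn i y)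

end IsPosBasis

noncomputable def nodeFactor (a b x : ℝ) : ℝ[X] :=
  if x = a then X - C a else if x = b then C b - X else (X - C x) ^ 2

section nodeFactor

variable {a b x y : ℝ}

theorem nodeFactor_eval_self : (nodeFactor a b x).eval x = 0 := by
  unfold nodeFactor
  split_ifs with ha hb <;> simp [*]

theorem nodeFactor_eval_nonneg (hy : y ∈ Icc a b) : 0 ≤ (nodeFactor a b x).eval y := by
  unfold nodeFactor
  split_ifs <;> simp only [eval_sub, eval_pow, eval_X, eval_C] <;>
    linarith [hy.1, hy.2, sq_nonneg (y - x)]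

theorem nodeFactor_eval_pos (hy : y ∈ Icc a b) (hyx : y ≠ x) : 0 < (nodeFactor a b x).eval y := by
  unfold nodeFactor
  split_ifs with ha hb
  · simp only [eval_sub, eval_X, eval_C]
    exact sub_pos.2 (hy.1.lt_of_ne (ha ▸ hyx.symm))
  · simp only [eval_sub, eval_X, eval_C]
    exact sub_pos.2 (hy.2.lt_of_ne (hb ▸ hyx))
  · simp only [eval_pow, eval_sub, eval_X, eval_C]
    exact pow_two_pos_of_ne_zero (sub_ne_zero.2 hyx)

theorem natDegree_nodeFactor_le : (nodeFactor a b x).natDegree ≤ 2 := by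
  unfold nodeFactor
  split_ifs <;> compute_degree!

theorem natDegree_nodeFactor_le_one (hx : x = a ∨ x = b) : (nodeFactor a b x).natDegree ≤ 1 := by
  unfold nodeFactor
  split_ifs with ha hb
  · compute_degree!
  · compute_degree!
  · exact absurd hx (by tauto)

theorem natDegree_prod_nodeFactor_le {ι : Type*} [DecidableEq ι] (s : Finset ι) (t : ι → ℝ)
    (hs : s.Nonempty → ∃ i ∈ s, t i = a ∨ t i = b) :
    (∏ i ∈ s, nodeFactor a b (t i)).natDegree ≤ 2 * #s - 1 := by
  rcases s.eq_empty_or_nonempty with rfl | hne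
  · simp
  obtain ⟨i, hi, hend⟩ := hs hne
  rw [← mul_prod_erase _ _ hi]
  refine natDegree_mul_le.trans ?_
  have hrest := (natDegree_prod_le (s.erase i) fun j => nodeFactor a b (t j)).trans
    (sum_le_card_nsmul (s.erase i) _ 2 fun j _ => natDegree_nodeFactor_le (x := t j))
  have := card_erase_add_one hi
  have := natDegree_nodeFactor_le_one hend
  rw [smul_eq_mul] at hrest
  omega

end nodeFactor

theorem posBasisWithDeg_of_nodes {a b : ℝ} {n : ℕ} (t : Fin n → ℝ) (ht : Injective t)
    (hmem : ∀ i, t i ∈ Icc a b)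
    (hend : ∀ j, (univ.erase j).Nonempty → ∃ i ∈ univ.erase j, t i = a ∨ t i = b) :
    PosBasisWithDeg (Icc a b) n (2 * n - 3) := by
  set P : Fin n → ℝ[X] := fun j => ∏ i ∈ univ.erase j, nodeFactor a b (t i)
  refine ⟨fun j y => (P j).eval y, fun j => ⟨P j, ?_, fun _ => rfl⟩,
    IsPosBasis.of_nodes (fun i => ⟨t i, hmem i⟩) (fun j y => ?_) (fun j => ?_) fun i j hij => ?_⟩
  · have := natDegree_prod_nodeFactor_le _ _ (hend j)
    rwa [card_erase_of_mem (Finset.mem_univ j), card_univ, Fintype.card_fin,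
      show 2 * (n - 1) - 1 = 2 * n - 3 by omega] at this
  · rw [eval_prod]
    exact prod_nonneg fun i _ => nodeFactor_eval_nonneg y.2
  · rw [eval_prod]
    exact prod_pos fun i hi => nodeFactor_eval_pos (hmem j) (ht.ne (ne_of_mem_erase hi).symm)
  · rw [eval_prod]
    exact prod_eq_zero (mem_erase.2 ⟨hij.symm, Finset.mem_univ j⟩) nodeFactor_eval_self

theorem posBasisWithDeg_Icc {a b : ℝ} (hab : a < b) (n : ℕ) :
    PosBasisWithDeg (Icc a b) n (2 * n - 3) := by
  have hscale : ∀ i : Fin n, (i : ℝ) / ((n : ℝ) - 1) ∈ Icc (0 : ℝ) 1 := fun i => by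
    have : (i : ℝ) + 1 ≤ n := by exact_mod_cast i.isLt
    exact ⟨div_nonneg (Nat.cast_nonneg _) (by linarith),
      div_le_one_of_le₀ (by linarith) (by linarith)⟩
  refine posBasisWithDeg_of_nodes (fun i => a + (b - a) * ((i : ℝ) / ((n : ℝ) - 1)))
    (fun i j hij => ?_) (fun i => ?_) fun j ⟨i, hi⟩ => ?_
  · rcases le_or_gt n 1 with hn | hn
    · exact Fin.ext (by omega)
    · have hn' : (n : ℝ) - 1 ≠ 0 := sub_ne_zero.2 (by exact_mod_cast hn.ne')
      have := mul_left_cancel₀ (sub_ne_zero.2 hab.ne') (add_left_cancel hij)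
      rw [div_left_inj' hn', Nat.cast_inj] at this
      exact Fin.ext this
  · obtain ⟨h0, h1⟩ := hscale i
    constructor <;> nlinarith
  · have hn : 2 ≤ n := by
      have := ne_of_mem_erase hi
      omega
    have hlast : (((n - 1 : ℕ) : ℝ)) / ((n : ℝ) - 1) = 1 := by
      rw [Nat.cast_sub (by omega), Nat.cast_one]
      exact div_self (sub_ne_zero.2 (by exact_mod_cast (by omega : n ≠ 1)))
    by_cases hj : j = ⟨0, by omega⟩
    · refine ⟨⟨n - 1, by omega⟩, mem_erase.2 ⟨fun h => ?_, Finset.mem_univ _⟩, Or.inr ?_⟩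
      · rw [hj, Fin.mk.injEq] at h
        omega
      · simp only [hlast]
        ring
    · exact ⟨⟨0, by omega⟩, mem_erase.2 ⟨Ne.symm hj, Finset.mem_univ _⟩, Or.inl (by simp)⟩

theorem Finset.exists_card_erase_inter_le_one {α : Type*} [DecidableEq α] {s u : Finset α}
    (hs : s.Nonempty) (hu : #u ≤ 2) : ∃ x ∈ s, #(s.erase x ∩ u) ≤ 1 := by
  rcases (s ∩ u).eq_empty_or_nonempty with h | ⟨x, hx⟩
  · obtain ⟨x, hx⟩ := hs
    refine ⟨x, hx, ?_⟩
    rw [erase_inter, h]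
    simp
  · refine ⟨x, (mem_inter.1 hx).1, ?_⟩
    rw [erase_inter, card_erase_of_mem hx]
    have := card_le_card (inter_subset_right (s₁ := s) (s₂ := u))
    omega

section LowerBound

variable {ι : Type*} [Fintype ι] {a b : ℝ} {p : ι → ℝ[X]}

theorem eval_nonneg_of_isPosBasis (h : IsPosBasis fun i (x : Icc a b) => (p i).eval (x : ℝ))
    (i : ι) : ∀ x ∈ Icc a b, 0 ≤ (p i).eval x :=
  fun x hx => h.nonneg i ⟨x, hx⟩

theorem ne_zero_of_isPosBasis (h : IsPosBasis fun i (x : Icc a b) => (p i).eval (x : ℝ))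
    (i : ι) : p i ≠ 0 :=
  fun h0 => h.1.ne_zero i (funext fun x => by simp [h0])

theorem exists_nodes_of_isPosBasis [DecidableEq ι]
    (h : IsPosBasis fun i (x : Icc a b) => (p i).eval (x : ℝ)) :
    ∃ t : ι → ℝ, (∀ j, t j ∈ Icc a b) ∧
      ∀ i j, i ≠ j → (p j).rootMultiplicity (t j) < (p i).rootMultiplicity (t j) := by
  have hnode : ∀ j, ∃ t ∈ Icc a b, ∀ i, i ≠ j →
      (p j).rootMultiplicity t < (p i).rootMultiplicity t := by
    intro j
    obtain ⟨t, ht, hlt⟩ := exists_forall_rootMultiplicity_lt isCompact_Icc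
      (q := ∑ i ∈ univ.erase j, p i) fun k => by
        obtain ⟨x, hx⟩ := h.exists_mul_sum_erase_lt j (k + 1)
        exact ⟨x, x.2, by simpa only [eval_finsetSum] using hx⟩
    refine ⟨t, ht, fun i hij => hlt _ (ne_zero_of_isPosBasis h i) fun x hx => ?_⟩
    have hnn := eval_nonneg_of_isPosBasis h
    rw [abs_of_nonneg (hnn i x hx), eval_finsetSum]
    exact single_le_sum (fun k _ => hnn k x hx) (mem_erase.2 ⟨hij, Finset.mem_univ i⟩)
  choose t ht hlt using hnode
  exact ⟨t, ht, fun i j hij => hlt j i hij⟩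

theorem two_le_rootMultiplicity_add_ite {q : ℝ[X]} {t : ℝ} (hq : q ≠ 0) (ht : t ∈ Icc a b)
    (hnn : ∀ x ∈ Icc a b, 0 ≤ q.eval x) (hpos : 0 < q.rootMultiplicity t) :
    2 ≤ q.rootMultiplicity t + if t = a ∨ t = b then 1 else 0 := by
  split_ifs with hend
  · omega
  · have hint : t ∈ Ioo a b := ⟨ht.1.lt_of_ne (by tauto), ht.2.lt_of_ne (by tauto)⟩
    obtain ⟨k, hk⟩ := even_rootMultiplicity_of_nonneg hq (isOpen_Ioo.mem_nhds hint)
      fun x hx => hnn x (Ioo_subset_Icc_self hx)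
    omega

theorem two_mul_card_sub_three_le [DecidableEq ι] {d : ℕ} (hd : ∀ i, (p i).natDegree ≤ d)
    (hp : ∀ i, p i ≠ 0) (hnn : ∀ i, ∀ x ∈ Icc a b, 0 ≤ (p i).eval x) (t : ι → ℝ)
    (ht : ∀ j, t j ∈ Icc a b)
    (hlt : ∀ i j, i ≠ j → (p j).rootMultiplicity (t j) < (p i).rootMultiplicity (t j)) :
    2 * Fintype.card ι - 3 ≤ d := by
  rcases isEmpty_or_nonempty ι with hι | hι
  · simp
  have hinj : Injective t := fun i j hij => by
    by_contra hne
    have := hlt j i (Ne.symm hne)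
    rw [hij] at this
    exact lt_asymm this (hlt i j hne)
  set E := univ.filter fun j => t j = a ∨ t j = b
  have hE : #E ≤ 2 := (card_le_card_of_injOn t (fun j hj => by simpa [E] using hj)
    hinj.injOn).trans card_le_two
  obtain ⟨i, -, hi⟩ := exists_card_erase_inter_le_one univ_nonempty hE
  have hcount := calc 2 * #(univ.erase i) = ∑ j ∈ univ.erase i, 2 := by simp [mul_comm]
    _ ≤ ∑ j ∈ univ.erase i, ((p i).rootMultiplicity (t j) + if j ∈ E then 1 else 0) :=
        sum_le_sum fun j hj => by
          simpa [E] using two_le_rootMultiplicity_add_ite (hp i) (ht j) (hnn i)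
            ((Nat.zero_le _).trans_lt (hlt i j (ne_of_mem_erase hj).symm))
    _ = ∑ x ∈ (univ.erase i).image t, (p i).rootMultiplicity x + #(univ.erase i ∩ E) := by
        rw [sum_add_distrib, sum_image fun x _ y _ h => hinj h, sum_boole, filter_mem_eq_inter,
          Nat.cast_id]
    _ ≤ d + 1 := add_le_add ((sum_rootMultiplicity_le_natDegree _ _).trans (hd i)) hi
  rw [card_erase_of_mem (Finset.mem_univ i), card_univ] at hcount
  omega

end LowerBound

theorem two_mul_sub_three_le_of_posBasisWithDeg {a b : ℝ} {n d : ℕ}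
    (h : PosBasisWithDeg (Icc a b) n d) : 2 * n - 3 ≤ d := by
  obtain ⟨bb, hdeg, hbasis⟩ := h
  choose p hpd hpe using hdeg
  obtain rfl : bb = fun i (x : Icc a b) => (p i).eval (x : ℝ) := funext₂ hpe
  obtain ⟨t, ht, hlt⟩ := exists_nodes_of_isPosBasis hbasis
  simpa using two_mul_card_sub_three_le hpd (ne_zero_of_isPosBasis hbasis)
    (eval_nonneg_of_isPosBasis hbasis) t ht hlt

theorem dn_interval_general (a b : ℝ) (hab : a < b) (n : ℕ) :
    IsLeast {d | PosBasisWithDeg (Set.Icc a b) n d} (2 * n - 3) :=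
  ⟨posBasisWithDeg_Icc hab n, fun _ hd => two_mul_sub_three_le_of_posBasisWithDeg hd⟩

/-- For `Ω = [a,b]` with `a < b` (the case `λ(Ω) = 0`) and `n ≥ 3`, the minimal possible
maximal degree of an `n`-element positive basis of an `n`-dimensional subspace of
polynomial functions on `[a,b]` is `d_n(Ω) = 2n - 3`. -/
theorem dn_interval (a b : ℝ) (hab : a < b) (n : ℕ) (hn : 3 ≤ n) :
    IsLeast {d | PosBasisWithDeg (Set.Icc a b) n d} (2 * n - 3) :=
  dn_interval_general a b hab n
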